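/- Let G = (V, E) be a graph with a linear order < on E. Then χ(G, x) = Σ_{F = (V, A_f) spanning forest with e(F)=0} Σ_{A_i ⊆ E_i(F)} x^{|V| − |A_f \ A_i|} (−1)^{|A_f \ A_i|}, i.e., the chromatic polynomial is the signed sum over all edge sets obtained from spanning forests with no externally active edges by deleting subsets of internally active edges (a form of the Broken-Cycle Theorem). -/

import Mathlib

/-! Inclusion–exclusion over the monochromatic edges gives `χ(G, n) = ∑_{A ⊆ E} (-1)^|A| n^k(A)`.
For `A ⊆ E`, run Kruskal's algorithm scanning the edges of `A` in increasing order and then the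
other edges in decreasing order. The spanning forest `B` it produces is the only one with
`B \ A ⊆ E_i(B)` and `A \ B ⊆ E_e(B)`, so the subsets of `E` are partitioned into the intervals
`[B \ E_i(B), B ∪ E_e(B)]`. On the interval of `B`, `A ∩ B` already spans `A`, so
`k(A) = |V| - |A ∩ B|`, and the alternating sum over the part `A \ B ⊆ E_e(B)` vanishes unless
`E_e(B) = ∅`. -/

open Finset

attribute [local instance] Classical.propDecidable

/-- A multigraph on vertex type `V` with edge index type `E` is given by a map
`ends : E → Sym2 V` (loops and parallel edges are allowed).  For an edge subset
`A ⊆ E`, `edgeGraph ends A` is the simple graph on `V` whose adjacency is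
witnessed by some edge of `A`; it determines the connected components of the
spanning subgraph `(V, A)`. -/
def edgeGraph {V E : Type} (ends : E → Sym2 V) (A : Finset E) : SimpleGraph V where
  Adj a b := a ≠ b ∧ ∃ e ∈ A, ends e = s(a, b)
  symm := by
    constructor
    rintro a b ⟨hab, e, he, hs⟩
    exact ⟨Ne.symm hab, e, he, by rw [hs, Sym2.eq_swap]⟩
  loopless := by constructor; rintro a ⟨h, -⟩; exact h rfl

/-- `kc ends A` is the number of connected components of the spanning subgraph `(V, A)`. -/
noncomputable def kc {V E : Type} (ends : E → Sym2 V) (A : Finset E) : ℕ :=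
  Nat.card (edgeGraph ends A).ConnectedComponent

/-- `(V, A)` is a spanning forest of `(V, E)`: it is a forest
(`|A| + k((V,A)) = |V|`, which rules out loops, parallel edges and cycles)
with as many connected components as the whole graph. -/
def IsSpanningForest {V E : Type} [Fintype V] [Fintype E] (ends : E → Sym2 V)
    (A : Finset E) : Prop :=
  A.card + kc ends A = Fintype.card V ∧ kc ends A = kc ends Finset.univ

/-- `F - e + f`. -/
def swapEdge {E : Type} [DecidableEq E] (A : Finset E) (e f : E) : Finset E :=
  insert f (A.erase e)

/-- `e` is internally active in the spanning forest `(V, A)`. -/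
def InternallyActive {V E : Type} [Fintype V] [Fintype E] [DecidableEq E] [LinearOrder E]
    (ends : E → Sym2 V) (A : Finset E) (e : E) : Prop :=
  e ∈ A ∧ ¬ ∃ f, f ∉ A ∧ e < f ∧ IsSpanningForest ends (swapEdge A e f)

/-- `f` is externally active in the spanning forest `(V, A)`. -/
def ExternallyActive {V E : Type} [Fintype V] [Fintype E] [DecidableEq E] [LinearOrder E]
    (ends : E → Sym2 V) (A : Finset E) (f : E) : Prop :=
  f ∉ A ∧ ¬ ∃ e, e ∈ A ∧ f < e ∧ IsSpanningForest ends (swapEdge A e f)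

/-- The set `E_i(F)` of internally active edges of the spanning forest `F = (V, A)`. -/
noncomputable def intAct {V E : Type} [Fintype V] [Fintype E] [DecidableEq E] [LinearOrder E]
    (ends : E → Sym2 V) (A : Finset E) : Finset E :=
  Finset.univ.filter (InternallyActive ends A)

/-- The set `E_e(F)` of externally active edges of the spanning forest `F = (V, A)`. -/
noncomputable def extAct {V E : Type} [Fintype V] [Fintype E] [DecidableEq E] [LinearOrder E]
    (ends : E → Sym2 V) (A : Finset E) : Finset E :=
  Finset.univ.filter (ExternallyActive ends A)

/-- Number of proper colorings of the multigraph `(V, ends)` with `n` colors. -/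
noncomputable def chromCount {V E : Type} [Fintype V] [Fintype E] (ends : E → Sym2 V)
    (n : ℕ) : ℕ :=
  Nat.card {c : V → Fin n // ∀ e : E, ∀ a b : V, ends e = s(a, b) → c a ≠ c b}

open SimpleGraph

section Connectivity

variable {V E : Type} {ends : E → Sym2 V}

/-- `f` lies in the closure of `S` in the cycle matroid. -/
def Spanned (ends : E → Sym2 V) (S : Finset E) (f : E) : Prop :=
  ∀ a b : V, ends f = s(a, b) → (edgeGraph ends S).Reachable a b

lemma exists_ends_eq (ends : E → Sym2 V) (f : E) : ∃ a b : V, ends f = s(a, b) := by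
  induction ends f using Sym2.ind with | _ a b => exact ⟨a, b, rfl⟩

lemma spanned_iff {S : Finset E} {f : E} {a b : V} (hf : ends f = s(a, b)) :
    Spanned ends S f ↔ (edgeGraph ends S).Reachable a b := by
  refine ⟨fun h => h a b hf, fun h c d hcd => ?_⟩
  rcases Sym2.eq_iff.mp (hf.symm.trans hcd) with ⟨rfl, rfl⟩ | ⟨rfl, rfl⟩
  exacts [h, h.symm]

lemma edgeGraph_mono {S T : Finset E} (h : S ⊆ T) : edgeGraph ends S ≤ edgeGraph ends T :=
  fun _ _ ⟨hne, e, he, hs⟩ => ⟨hne, e, h he, hs⟩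

lemma Spanned.mono {S T : Finset E} (h : S ⊆ T) {f : E} (hf : Spanned ends S f) :
    Spanned ends T f :=
  fun a b hab => (hf a b hab).mono (edgeGraph_mono h)

lemma spanned_of_mem {S : Finset E} {f : E} (hf : f ∈ S) : Spanned ends S f := by
  intro a b hab
  by_cases hne : a = b
  · exact hne ▸ Reachable.refl a
  · exact Adj.reachable ⟨hne, f, hf, hab⟩

lemma reachable_of_forall_spanned {S T : Finset E} (h : ∀ g ∈ T, Spanned ends S g) {u v : V}
    (huv : (edgeGraph ends T).Reachable u v) : (edgeGraph ends S).Reachable u v := by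
  obtain ⟨w⟩ := huv
  induction w with
  | nil => rfl
  | cons hadj _ ih =>
    obtain ⟨-, g, hg, hs⟩ := hadj
    exact (h g hg _ _ hs).trans ih

lemma Spanned.of_forall_spanned {S T : Finset E} (h : ∀ g ∈ T, Spanned ends S g) {f : E}
    (hf : Spanned ends T f) : Spanned ends S f :=
  fun a b hab => reachable_of_forall_spanned h (hf a b hab)

lemma reachable_insert_cases [DecidableEq E] {S : Finset E} {f : E} {a b : V}
    (hf : ends f = s(a, b)) {x y : V} (hxy : (edgeGraph ends (insert f S)).Reachable x y) :
    (edgeGraph ends S).Reachable x y ∨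
      ((edgeGraph ends S).Reachable x a ∧ (edgeGraph ends S).Reachable b y) ∨
      ((edgeGraph ends S).Reachable x b ∧ (edgeGraph ends S).Reachable a y) := by
  obtain ⟨w⟩ := hxy
  induction w with
  | nil => exact Or.inl (Reachable.refl _)
  | @cons x z y hadj _ ih =>
    obtain ⟨hne, g, hg, hs⟩ := hadj
    rcases Finset.mem_insert.mp hg with rfl | hgS
    · rcases Sym2.eq_iff.mp (hs.symm.trans hf) with ⟨rfl, rfl⟩ | ⟨rfl, rfl⟩ <;>
        rcases ih with h | ⟨h₁, h₂⟩ | ⟨h₁, h₂⟩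
      exacts [Or.inr (Or.inl ⟨Reachable.refl _, h⟩), Or.inl (h₁.symm.trans h₂), Or.inl h₂,
        Or.inr (Or.inr ⟨Reachable.refl _, h⟩), Or.inl h₂, Or.inl (h₁.symm.trans h₂)]
    · have hxz : (edgeGraph ends S).Reachable x z := Adj.reachable ⟨hne, g, hgS, hs⟩
      rcases ih with h | ⟨h₁, h₂⟩ | ⟨h₁, h₂⟩
      exacts [Or.inl (hxz.trans h), Or.inr (Or.inl ⟨hxz.trans h₁, h₂⟩),
        Or.inr (Or.inr ⟨hxz.trans h₁, h₂⟩)]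

end Connectivity

section ComponentCount

variable {V E : Type} {ends : E → Sym2 V}

lemma kc_empty [Fintype V] : kc ends ∅ = Fintype.card V := by
  have hbot : edgeGraph ends ∅ = ⊥ := by ext; simp [edgeGraph]
  rw [← Nat.card_eq_fintype_card]
  refine (Nat.card_eq_of_bijective (edgeGraph ends ∅).connectedComponentMk ⟨?_, ?_⟩).symm
  · intro u v h
    rwa [ConnectedComponent.eq, hbot, reachable_bot] at h
  · exact Quot.mk_surjective

lemma kc_eq_of_forall_spanned {S T : Finset E} (hST : S ⊆ T) (h : ∀ g ∈ T, Spanned ends S g) :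
    kc ends T = kc ends S :=
  Nat.card_congr <| Quot.congrRight fun _ _ =>
    ⟨reachable_of_forall_spanned h, fun huv => huv.mono (edgeGraph_mono hST)⟩

lemma kc_insert_of_spanned [DecidableEq E] {S : Finset E} {f : E} (hf : Spanned ends S f) :
    kc ends (insert f S) = kc ends S :=
  kc_eq_of_forall_spanned (Finset.subset_insert f S) fun g hg => by
    rcases Finset.mem_insert.mp hg with rfl | hgS
    exacts [hf, spanned_of_mem hgS]

/-- Adding an edge between two components merges exactly those two components. -/
lemma kc_insert_of_not_spanned [Finite V] [DecidableEq E] {S : Finset E} {f : E}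
    (hf : ¬ Spanned ends S f) : kc ends S = kc ends (insert f S) + 1 := by
  obtain ⟨a, b, hab⟩ := exists_ends_eq ends f
  rw [spanned_iff hab] at hf
  set G := edgeGraph ends S
  set G' := edgeGraph ends (insert f S)
  have hGG' : G ≤ G' := edgeGraph_mono (Finset.subset_insert f S)
  let φ : {c : G.ConnectedComponent // c ≠ G.connectedComponentMk b} → G'.ConnectedComponent :=
    fun c => c.1.map (Hom.ofLE hGG')
  have hφ : Function.Bijective φ := by
    constructor
    · rintro ⟨c, hc⟩ ⟨d, hd⟩ h
      induction c using ConnectedComponent.ind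
      induction d using ConnectedComponent.ind
      simp only [φ, ConnectedComponent.map_mk, ConnectedComponent.eq, ne_eq, Subtype.mk.injEq,
        Hom.coe_ofLE, id] at h hc hd ⊢
      rcases reachable_insert_cases hab h with h | ⟨-, h⟩ | ⟨h, -⟩
      exacts [h, (hd h.symm).elim, (hc h).elim]
    · intro c
      induction c using ConnectedComponent.ind with | h v =>
      by_cases hv : G.Reachable v b
      · refine ⟨⟨G.connectedComponentMk a, by rwa [ne_eq, ConnectedComponent.eq]⟩, ?_⟩
        simp only [φ, ConnectedComponent.map_mk, ConnectedComponent.eq, Hom.coe_ofLE, id]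
        exact (spanned_of_mem (Finset.mem_insert_self f S) a b hab).trans (hv.symm.mono hGG')
      · exact ⟨⟨G.connectedComponentMk v, by rwa [ne_eq, ConnectedComponent.eq]⟩, rfl⟩
  rw [kc, kc, ← Nat.card_eq_of_bijective φ hφ, ← Finite.card_option,
    Nat.card_congr (Equiv.optionSubtypeNe _)]

lemma kc_le_kc_insert_add_one [Finite V] [DecidableEq E] (S : Finset E) (f : E) :
    kc ends S ≤ kc ends (insert f S) + 1 := by
  by_cases hf : Spanned ends S f
  · rw [kc_insert_of_spanned hf]; omega
  · rw [kc_insert_of_not_spanned hf]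

lemma kc_le_kc_add_card_sdiff [Finite V] [DecidableEq E] {S T : Finset E} (hST : S ⊆ T) :
    kc ends S ≤ kc ends T + (T \ S).card := by
  suffices ∀ U : Finset E, kc ends S ≤ kc ends (S ∪ U) + U.card by
    simpa [Finset.union_sdiff_of_subset hST] using this (T \ S)
  intro U
  induction U using Finset.induction_on with
  | empty => simp
  | insert g U hg ih =>
    have := kc_le_kc_insert_add_one (ends := ends) (S ∪ U) g
    rw [Finset.union_insert, Finset.card_insert_of_notMem hg]
    omega

lemma card_le_card_add_kc [Fintype V] [DecidableEq E] (S : Finset E) :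
    Fintype.card V ≤ S.card + kc ends S := by
  simpa [kc_empty, add_comm] using kc_le_kc_add_card_sdiff (ends := ends) (Finset.empty_subset S)

end ComponentCount

section Forest

variable {V E : Type} [Fintype V] {ends : E → Sym2 V}

def IsForest (ends : E → Sym2 V) (S : Finset E) : Prop :=
  S.card + kc ends S = Fintype.card V

lemma IsSpanningForest.card_eq [Fintype E] {B B' : Finset E} (hB : IsSpanningForest ends B)
    (hB' : IsSpanningForest ends B') : B.card = B'.card := by
  unfold IsSpanningForest at hB hB'
  omega

variable [DecidableEq E]

lemma IsForest.subset {S T : Finset E} (hT : IsForest ends T) (hST : S ⊆ T) :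
    IsForest ends S := by
  have := Finset.card_sdiff_add_card_eq_card hST
  have := kc_le_kc_add_card_sdiff (ends := ends) hST
  have := card_le_card_add_kc (ends := ends) S
  unfold IsForest at *
  omega

lemma IsForest.kc_erase {B : Finset E} (hB : IsForest ends B) {e : E} (he : e ∈ B) :
    kc ends (B.erase e) = kc ends B + 1 := by
  have := hB.subset (B.erase_subset e)
  have := Finset.card_erase_add_one he
  unfold IsForest at *
  omega

lemma IsForest.not_spanned_erase {B : Finset E} (hB : IsForest ends B) {e : E} (he : e ∈ B) :
    ¬ Spanned ends (B.erase e) e := fun hspan => by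
  have := kc_insert_of_spanned hspan
  rw [Finset.insert_erase he, hB.kc_erase he] at this
  omega

lemma IsForest.insert {S : Finset E} (hS : IsForest ends S) {f : E} (hf : ¬ Spanned ends S f) :
    IsForest ends (insert f S) := by
  have hfS : f ∉ S := fun h => hf (spanned_of_mem h)
  have := kc_insert_of_not_spanned hf
  unfold IsForest at *
  rw [Finset.card_insert_of_notMem hfS]
  omega

lemma isSpanningForest_swapEdge_iff [Fintype E] {B : Finset E} (hB : IsSpanningForest ends B)
    {e f : E} (he : e ∈ B) (hf : f ∉ B) :
    IsSpanningForest ends (swapEdge B e f) ↔ ¬ Spanned ends (B.erase e) f := by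
  have hcard : (swapEdge B e f).card = B.card := by
    rw [swapEdge, Finset.card_insert_of_notMem fun h => hf (Finset.mem_of_mem_erase h),
      Finset.card_erase_add_one he]
  have hkc := IsForest.kc_erase hB.1 he
  unfold IsSpanningForest at *
  constructor
  · rintro ⟨-, hswap⟩ hspan
    rw [swapEdge, kc_insert_of_spanned hspan] at hswap
    omega
  · intro hspan
    have := kc_insert_of_not_spanned hspan
    rw [← swapEdge] at this
    omega

end Forest

section Greedy

variable {V E : Type} [DecidableEq E]

/-- The order in which the greedy algorithm for `A` scans the edges: the edges of `A` in increasing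
order, then the remaining edges in decreasing order. -/
def scanKey (A : Finset E) (e : E) : E ⊕ₗ Eᵒᵈ :=
  toLex (if e ∈ A then Sum.inl e else Sum.inr (OrderDual.toDual e))

lemma scanKey_injective (A : Finset E) : Function.Injective (scanKey A) := by
  intro e f h
  unfold scanKey at h
  split_ifs at h <;> simp at h <;> exact h

variable [LinearOrder E]

section ScanKey

variable {A : Finset E} {e f : E}

lemma scanKey_lt_of_mem_of_notMem (he : e ∈ A) (hf : f ∉ A) : scanKey A e < scanKey A f := by
  simp [scanKey, he, hf]

lemma scanKey_lt_iff_of_mem (he : e ∈ A) (hf : f ∈ A) :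
    scanKey A e < scanKey A f ↔ e < f := by
  simp [scanKey, he, hf]

lemma scanKey_lt_iff_of_notMem (he : e ∉ A) (hf : f ∉ A) :
    scanKey A e < scanKey A f ↔ f < e := by
  simp [scanKey, he, hf]

lemma mem_of_scanKey_lt (h : scanKey A e < scanKey A f) (hf : f ∈ A) : e ∈ A := by
  by_contra he
  exact (scanKey_lt_of_mem_of_notMem hf he).not_gt h

end ScanKey

variable [Fintype E]

noncomputable def scannedBefore (A : Finset E) (e : E) : Finset E :=
  Finset.univ.filter fun f => scanKey A f < scanKey A e

lemma mem_scannedBefore {A : Finset E} {e f : E} :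
    f ∈ scannedBefore A e ↔ scanKey A f < scanKey A e := by
  simp [scannedBefore]

/-- Kruskal's algorithm run on the edges in `scanKey A` order. -/
noncomputable def greedyForest (ends : E → Sym2 V) (A : Finset E) : Finset E :=
  Finset.univ.filter fun e => ¬ Spanned ends (scannedBefore A e) e

variable {ends : E → Sym2 V} {A : Finset E}

lemma mem_greedyForest {e : E} :
    e ∈ greedyForest ends A ↔ ¬ Spanned ends (scannedBefore A e) e := by
  simp [greedyForest]

lemma notMem_greedyForest {e : E} :
    e ∉ greedyForest ends A ↔ Spanned ends (scannedBefore A e) e := by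
  simp [greedyForest]

lemma spanned_greedyForest_inter_scannedBefore (e : E) :
    ∀ g ∈ scannedBefore A e, Spanned ends (greedyForest ends A ∩ scannedBefore A e) g := by
  induction e using (InvImage.wf (scanKey A) wellFounded_lt).induction with | _ e ih =>
  intro g hg
  have hge := mem_scannedBefore.mp hg
  by_cases hgF : g ∈ greedyForest ends A
  · exact spanned_of_mem (Finset.mem_inter.mpr ⟨hgF, hg⟩)
  · have hsub : scannedBefore A g ⊆ scannedBefore A e := fun h hh =>
      mem_scannedBefore.mpr ((mem_scannedBefore.mp hh).trans hge)
    exact (notMem_greedyForest.mp hgF).of_forall_spanned fun h hh =>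
      (ih g hge h hh).mono (Finset.inter_subset_inter_left hsub)

lemma spanned_greedyForest_inter_of_notMem {f : E} (hf : f ∉ greedyForest ends A) :
    Spanned ends (greedyForest ends A ∩ scannedBefore A f) f :=
  (notMem_greedyForest.mp hf).of_forall_spanned (spanned_greedyForest_inter_scannedBefore f)

/-- Every edge of `A` is spanned by the part of the greedy forest inside `A`, since the greedy
algorithm scans `A` first. -/
lemma kc_inter_greedyForest (A : Finset E) :
    kc ends (A ∩ greedyForest ends A) = kc ends A := by
  refine (kc_eq_of_forall_spanned Finset.inter_subset_left fun g hg => ?_).symm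
  by_cases hgF : g ∈ greedyForest ends A
  · exact spanned_of_mem (Finset.mem_inter.mpr ⟨hg, hgF⟩)
  · refine (spanned_greedyForest_inter_of_notMem hgF).mono fun h hh => ?_
    obtain ⟨hhF, hhg⟩ := Finset.mem_inter.mp hh
    exact Finset.mem_inter.mpr ⟨mem_of_scanKey_lt (mem_scannedBefore.mp hhg) hg, hhF⟩

variable [Fintype V]

lemma isForest_of_forall_not_spanned (A S : Finset E)
    (h : ∀ e ∈ S, ¬ Spanned ends (S ∩ scannedBefore A e) e) : IsForest ends S := by
  induction S using Finset.induction_on_max_value (scanKey A) with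
  | empty => simp [IsForest, kc_empty]
  | insert e S he hmax ih =>
    have hS : S ⊆ insert e S ∩ scannedBefore A e := fun g hg =>
      Finset.mem_inter.mpr ⟨Finset.mem_insert_of_mem hg, mem_scannedBefore.mpr
        ((hmax g hg).lt_of_ne fun hge => he (scanKey_injective A hge ▸ hg))⟩
    refine (ih fun g hg hspan => ?_).insert fun hspan => ?_
    · exact h g (Finset.mem_insert_of_mem hg)
        (hspan.mono (Finset.inter_subset_inter_right (Finset.subset_insert e S)))
    · exact h e (Finset.mem_insert_self e S) (hspan.mono hS)

lemma greedyForest_isSpanningForest (ends : E → Sym2 V) (A : Finset E) :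
    IsSpanningForest ends (greedyForest ends A) := by
  refine ⟨isForest_of_forall_not_spanned A _ fun e he hspan => ?_, ?_⟩
  · exact mem_greedyForest.mp he (hspan.mono Finset.inter_subset_right)
  · refine (kc_eq_of_forall_spanned (Finset.subset_univ _) fun g _ => ?_).symm
    by_cases hg : g ∈ greedyForest ends A
    · exact spanned_of_mem hg
    · exact (spanned_greedyForest_inter_of_notMem hg).mono Finset.inter_subset_left

end Greedy

section Activity

variable {V E : Type} [Fintype V] [Fintype E] [DecidableEq E] [LinearOrder E]
  {ends : E → Sym2 V} {B : Finset E}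

lemma mem_intAct {e : E} : e ∈ intAct ends B ↔ InternallyActive ends B e := by
  simp [intAct]

lemma mem_extAct {f : E} : f ∈ extAct ends B ↔ ExternallyActive ends B f := by
  simp [extAct]

lemma InternallyActive.lt_of_swapEdge {e f : E} (he : InternallyActive ends B e) (hf : f ∉ B)
    (hswap : IsSpanningForest ends (swapEdge B e f)) : f < e :=
  (Ne.lt_or_gt fun hfe : f = e => hf (hfe ▸ he.1)).resolve_right fun hef =>
    he.2 ⟨f, hf, hef, hswap⟩

lemma ExternallyActive.lt_of_swapEdge {e f : E} (hf : ExternallyActive ends B f) (he : e ∈ B)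
    (hswap : IsSpanningForest ends (swapEdge B e f)) : e < f :=
  (Ne.lt_or_gt fun hef : e = f => hf.1 (hef ▸ he)).resolve_right fun hfe =>
    hf.2 ⟨e, he, hfe, hswap⟩

/-- The exchange criterion for `B` to be the minimum spanning forest for the weights `scanKey A`. -/
def IsScanMinimal (ends : E → Sym2 V) (A B : Finset E) : Prop :=
  ∀ e ∈ B, ∀ f ∉ B, IsSpanningForest ends (swapEdge B e f) → scanKey A e < scanKey A f

variable {A : Finset E}

lemma greedyForest_isScanMinimal : IsScanMinimal ends A (greedyForest ends A) := by
  intro e he f hf hswap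
  by_contra hef
  have hsub : greedyForest ends A ∩ scannedBefore A f ⊆ (greedyForest ends A).erase e := by
    intro g hg
    obtain ⟨hgF, hgf⟩ := Finset.mem_inter.mp hg
    exact Finset.mem_erase.mpr ⟨by rintro rfl; exact hef (mem_scannedBefore.mp hgf), hgF⟩
  exact (isSpanningForest_swapEdge_iff (greedyForest_isSpanningForest ends A) he hf).mp hswap
    ((spanned_greedyForest_inter_of_notMem hf).mono hsub)

lemma IsScanMinimal.subset_greedyForest (hB : IsSpanningForest ends B)
    (hmin : IsScanMinimal ends A B) : B ⊆ greedyForest ends A := by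
  intro e he
  refine mem_greedyForest.mpr fun hspan => ?_
  obtain ⟨f, hf, hfspan⟩ : ∃ f ∈ scannedBefore A e, ¬ Spanned ends (B.erase e) f := by
    by_contra! h
    exact IsForest.not_spanned_erase hB.1 he (hspan.of_forall_spanned h)
  have hfe := mem_scannedBefore.mp hf
  have hfB : f ∉ B := fun hfB =>
    hfspan (spanned_of_mem (Finset.mem_erase.mpr ⟨ne_of_apply_ne _ hfe.ne, hfB⟩))
  exact (hmin e he f hfB ((isSpanningForest_swapEdge_iff hB he hfB).mpr hfspan)).not_gt hfe

/-- `B ⊆ greedyForest ends A`, and all spanning forests have the same size. -/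
lemma IsScanMinimal.eq_greedyForest (hB : IsSpanningForest ends B)
    (hmin : IsScanMinimal ends A B) : B = greedyForest ends A :=
  Finset.eq_of_subset_of_card_le (hmin.subset_greedyForest hB)
    ((greedyForest_isSpanningForest ends A).card_eq hB).le

lemma isScanMinimal_iff :
    IsScanMinimal ends A B ↔ B \ A ⊆ intAct ends B ∧ A \ B ⊆ extAct ends B := by
  constructor
  · intro hmin
    constructor
    · intro e he
      obtain ⟨heB, heA⟩ := Finset.mem_sdiff.mp he
      refine mem_intAct.mpr ⟨heB, fun ⟨f, hfB, hef, hswap⟩ => ?_⟩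
      have hlt := hmin e heB f hfB hswap
      have hfA : f ∉ A := fun hfA => heA (mem_of_scanKey_lt hlt hfA)
      exact ((scanKey_lt_iff_of_notMem heA hfA).mp hlt).not_gt hef
    · intro f hf
      obtain ⟨hfA, hfB⟩ := Finset.mem_sdiff.mp hf
      refine mem_extAct.mpr ⟨hfB, fun ⟨e, heB, hfe, hswap⟩ => ?_⟩
      have hlt := hmin e heB f hfB hswap
      exact ((scanKey_lt_iff_of_mem (mem_of_scanKey_lt hlt hfA) hfA).mp hlt).not_gt hfe
  · rintro ⟨hint, hext⟩ e he f hf hswap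
    have hint' (heA : e ∉ A) : f < e :=
      (mem_intAct.mp (hint (Finset.mem_sdiff.mpr ⟨he, heA⟩))).lt_of_swapEdge hf hswap
    have hext' (hfA : f ∈ A) : e < f :=
      (mem_extAct.mp (hext (Finset.mem_sdiff.mpr ⟨hfA, hf⟩))).lt_of_swapEdge he hswap
    by_cases heA : e ∈ A <;> by_cases hfA : f ∈ A
    · exact (scanKey_lt_iff_of_mem heA hfA).mpr (hext' hfA)
    · exact scanKey_lt_of_mem_of_notMem heA hfA
    · exact ((hint' heA).not_gt (hext' hfA)).elim
    · exact (scanKey_lt_iff_of_notMem heA hfA).mpr (hint' heA)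

lemma greedyForest_eq_iff (hB : IsSpanningForest ends B) :
    greedyForest ends A = B ↔ B \ A ⊆ intAct ends B ∧ A \ B ⊆ extAct ends B := by
  rw [← isScanMinimal_iff]
  exact ⟨fun h => h ▸ greedyForest_isScanMinimal, fun h => (h.eq_greedyForest hB).symm⟩

end Activity

section Whitney

variable {V E : Type} {ends : E → Sym2 V}

noncomputable def monoEdges [Fintype E] (ends : E → Sym2 V) {α : Type} (c : V → α) :
    Finset E :=
  Finset.univ.filter fun e => ∃ a b, ends e = s(a, b) ∧ c a = c b

lemma monoEdges_eq_empty_iff [Fintype E] {α : Type} {c : V → α} :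
    monoEdges ends c = ∅ ↔ ∀ e : E, ∀ a b : V, ends e = s(a, b) → c a ≠ c b := by
  simp [monoEdges, Finset.eq_empty_iff_forall_notMem]

lemma apply_eq_of_reachable [Fintype E] {α : Type} {c : V → α} {A : Finset E}
    (hA : A ⊆ monoEdges ends c) {u v : V} (huv : (edgeGraph ends A).Reachable u v) :
    c u = c v := by
  obtain ⟨w⟩ := huv
  induction w with
  | nil => rfl
  | cons hadj _ ih =>
    obtain ⟨-, e, he, hs⟩ := hadj
    obtain ⟨a, b, hab, hc⟩ := (Finset.mem_filter.mp (hA he)).2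
    rcases Sym2.eq_iff.mp (hs.symm.trans hab) with ⟨rfl, rfl⟩ | ⟨rfl, rfl⟩
    exacts [hc.trans ih, hc.symm.trans ih]

/-- The colorings monochromatic on `A` are the colorings of the components of `(V, A)`. -/
lemma card_subset_monoEdges [Finite V] [Fintype E] (α : Type) (A : Finset E) :
    Nat.card {c : V → α // A ⊆ monoEdges ends c} = Nat.card α ^ kc ends A := by
  let G := edgeGraph ends A
  have : {c : V → α // A ⊆ monoEdges ends c} ≃ (G.ConnectedComponent → α) :=
    { toFun := fun c => Quot.lift c.1 fun _ _ => apply_eq_of_reachable c.2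
      invFun := fun g => ⟨fun v => g (G.connectedComponentMk v), fun e he =>
        Finset.mem_filter.mpr ⟨Finset.mem_univ e, ?_⟩⟩
      left_inv := fun c => rfl
      right_inv := fun g => funext fun x => by induction x using ConnectedComponent.ind; rfl }
  · rw [Nat.card_congr this, Nat.card_fun, kc]
  · obtain ⟨a, b, hab⟩ := exists_ends_eq ends e
    exact ⟨a, b, hab, congrArg g (ConnectedComponent.sound (spanned_of_mem he a b hab))⟩

/-- Inclusion–exclusion over the set of monochromatic edges. -/
lemma chromCount_eq_sum_powerset [Fintype V] [Fintype E] (ends : E → Sym2 V) (n : ℕ) :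
    (chromCount ends n : ℤ) =
      ∑ A ∈ Finset.univ.powerset, (-1 : ℤ) ^ A.card * (n : ℤ) ^ kc ends A := by
  have hinc : (chromCount ends n : ℤ) =
      ∑ c : V → Fin n, ∑ A ∈ (monoEdges ends c).powerset, (-1 : ℤ) ^ A.card := by
    simp_rw [Finset.sum_powerset_neg_one_pow_card, Finset.sum_boole, chromCount,
      ← monoEdges_eq_empty_iff, Nat.card_eq_fintype_card, Fintype.card_subtype]
  rw [hinc, Finset.sum_comm' (t' := Finset.univ.powerset)
    (s' := fun A => Finset.univ.filter fun c => A ⊆ monoEdges ends c) (by simp)]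
  refine Finset.sum_congr rfl fun A _ => ?_
  rw [Finset.sum_const, ← Fintype.card_subtype, ← Nat.card_eq_fintype_card,
    card_subset_monoEdges, Nat.card_eq_fintype_card, Fintype.card_fin]
  simp [mul_comm]

end Whitney

section Assembly

lemma Finset.sdiff_sdiff_union_of_disjoint {α : Type*} [DecidableEq α] {B D X : Finset α}
    (hD : D ⊆ B) (hX : Disjoint X B) : B \ (B \ D ∪ X) = D := by
  ext x
  have : x ∈ X → x ∉ B := fun h => Finset.disjoint_left.mp hX h
  simp only [Finset.mem_sdiff, Finset.mem_union]
  grind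

lemma Finset.sdiff_union_sdiff_of_disjoint {α : Type*} [DecidableEq α] {B D X : Finset α}
    (hX : Disjoint X B) : (B \ D ∪ X) \ B = X := by
  ext x
  have : x ∈ X → x ∉ B := fun h => Finset.disjoint_left.mp hX h
  simp only [Finset.mem_sdiff, Finset.mem_union]
  grind

variable {V E : Type} [Fintype V] [Fintype E] [DecidableEq E] [LinearOrder E]
  {ends : E → Sym2 V} {B : Finset E}

lemma intAct_subset : intAct ends B ⊆ B := fun _ he => (mem_intAct.mp he).1

lemma disjoint_extAct : Disjoint (extAct ends B) B :=
  Finset.disjoint_left.mpr fun _ hf => (mem_extAct.mp hf).1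

/-- The fibre of `greedyForest` over `B` is the interval `[B \ intAct B, B ∪ extAct B]`. -/
lemma sum_fiber_greedyForest_eq_sum_powerset {M : Type*} [AddCommMonoid M]
    (hB : IsSpanningForest ends B) (φ : Finset E → Finset E → M) :
    ∑ A ∈ Finset.univ.powerset with greedyForest ends A = B, φ (B \ A) (A \ B) =
      ∑ D ∈ (intAct ends B).powerset, ∑ X ∈ (extAct ends B).powerset, φ D X := by
  have hinterval {p : Finset E × Finset E}
      (hp : p ∈ (intAct ends B).powerset ×ˢ (extAct ends B).powerset) :
      B \ (B \ p.1 ∪ p.2) = p.1 ∧ (B \ p.1 ∪ p.2) \ B = p.2 := by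
    obtain ⟨hD, hX⟩ := Finset.mem_product.mp hp
    rw [Finset.mem_powerset] at hD hX
    exact ⟨Finset.sdiff_sdiff_union_of_disjoint (hD.trans intAct_subset)
        (Finset.disjoint_of_subset_left hX disjoint_extAct),
      Finset.sdiff_union_sdiff_of_disjoint (Finset.disjoint_of_subset_left hX disjoint_extAct)⟩
  rw [← Finset.sum_product']
  refine Finset.sum_nbij' (fun A => (B \ A, A \ B)) (fun p => B \ p.1 ∪ p.2)
    (fun A hA => ?_) (fun p hp => ?_) (fun A _ => ?_) (fun p hp => ?_) fun _ _ => rfl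
  · simpa [greedyForest_eq_iff hB] using hA
  · refine Finset.mem_filter.mpr ⟨Finset.mem_powerset.mpr (Finset.subset_univ _),
      (greedyForest_eq_iff hB).mpr ?_⟩
    rw [(hinterval hp).1, (hinterval hp).2]
    simpa using hp
  · ext x
    simp only [Finset.mem_union, Finset.mem_sdiff]
    tauto
  · exact Prod.ext (hinterval hp).1 (hinterval hp).2

/-- Since `A ∩ B` spans `A`, the alternating sum over the `extAct B` coordinate of the interval
vanishes unless `extAct B = ∅`. -/
lemma sum_fiber_greedyForest (n : ℕ) (hB : IsSpanningForest ends B) :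
    ∑ A ∈ Finset.univ.powerset with greedyForest ends A = B,
        (-1 : ℤ) ^ A.card * (n : ℤ) ^ kc ends A =
      if extAct ends B = ∅ then
        ∑ D ∈ (intAct ends B).powerset,
          (n : ℤ) ^ (Fintype.card V - (B \ D).card) * (-1) ^ (B \ D).card
      else 0 := by
  set term : Finset E → ℤ := fun D =>
    (n : ℤ) ^ (Fintype.card V - (B \ D).card) * (-1) ^ (B \ D).card
  have hterm {A : Finset E} (hA : greedyForest ends A = B) :
      (-1 : ℤ) ^ A.card * (n : ℤ) ^ kc ends A = term (B \ A) * (-1) ^ (A \ B).card := by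
    have hF : IsForest ends (A ∩ B) :=
      IsForest.subset (hA ▸ greedyForest_isSpanningForest ends A).1 Finset.inter_subset_right
    have hkc : kc ends A = Fintype.card V - (A ∩ B).card := by
      rw [← kc_inter_greedyForest, hA]
      unfold IsForest at hF
      omega
    rw [hkc, ← Finset.card_inter_add_card_sdiff A B]
    simp only [term, sdiff_sdiff_right_self, Finset.inf_eq_inter, Finset.inter_comm B A]
    ring
  rw [Finset.sum_congr rfl fun A hA => hterm (Finset.mem_filter.mp hA).2,
    sum_fiber_greedyForest_eq_sum_powerset hB fun D X => term D * (-1) ^ X.card,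
    ← Finset.sum_mul_sum, Finset.sum_powerset_neg_one_pow_card]
  split_ifs <;> simp

end Assembly

/-- Broken-cycle form: the chromatic polynomial is the signed sum
over edge sets obtained from spanning forests with no externally active edges by
deleting subsets of internally active edges. -/
theorem chromatic_broken_cycle {V E : Type} [Fintype V] [Fintype E] [DecidableEq E]
    [LinearOrder E] (ends : E → Sym2 V) (n : ℕ) :
    (chromCount ends n : ℤ) =
      ∑ F ∈ Finset.univ.powerset.filter
          (fun A => IsSpanningForest ends A ∧ extAct ends A = ∅),
        ∑ Ai ∈ (intAct ends F).powerset,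
          (n : ℤ) ^ (Fintype.card V - (F \ Ai).card) * (-1) ^ (F \ Ai).card := by
  rw [chromCount_eq_sum_powerset, ← Finset.sum_fiberwise_of_maps_to
    (t := Finset.univ.powerset.filter (IsSpanningForest ends)) (g := greedyForest ends)
    fun A _ => by simpa using greedyForest_isSpanningForest ends A]
  rw [Finset.sum_congr rfl fun B hB => sum_fiber_greedyForest n (Finset.mem_filter.mp hB).2,
    ← Finset.sum_filter, Finset.filter_filter]
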